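/- Let R be a commutative ring, Y = Spec(B) an affine scheme of finite type over R embedded as a closed subscheme of A^n_R via a surjection R[x_1,...,x_n] → B, and let Ȳ be its projective closure in P^n_R. Suppose v = (v_1,...,v_d) is a tuple of linear forms in R[x_1,...,x_n] such that the closed subscheme L_v = V_+(x_0, v̄_1, ..., v̄_d) of P^n_R (where v̄_i is the homogenisation/linear part of v_i) satisfies L_v ∩ Ȳ = ∅. Then the morphism v : Y → A^d_R induced by the v_i is finite. -/

import Mathlib

open MvPolynomial

attribute [local instance] MvPolynomial.gradedAlgebra

noncomputable section

/-- The homogenisation of `p ∈ R[x₁,…,x_n]` with respect to a new variable `x₀`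
(of degree `totalDegree p`), living in `R[x₀,x₁,…,x_n]`. -/
def homogenize {R : Type} [CommRing R] {n : ℕ} (p : MvPolynomial (Fin n) R) :
    MvPolynomial (Fin (n + 1)) R :=
  ∑ m ∈ p.support,
    monomial (Finsupp.mapDomain Fin.succ m + Finsupp.single 0 (p.totalDegree - m.degree))
      (coeff m p)

/-!
Since `L_v ∩ Ȳ = ∅`, no relevant homogeneous prime contains the homogeneous ideal
`J = (homogenisations of ker π, x₀, v̄₁, …, v̄_d)`, so a power `x_i^N` of every variable
lies in `J`. Dehomogenising such a relation degree by degree (substitute `x₀ ↦ t`,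
`x_i ↦ x_i t` and read off the coefficient of `t^N`) gives
`x_i^N ≡ h + ∑ v_j g_j (mod ker π)` with `h`, `g_j` of degree `< N`. By induction on the
degree, `B` is then spanned over `R[v]` by the images of the finitely many monomials of
degree at most `∑ N_i`.
-/

namespace ProjectiveSpectrum

variable {A σ : Type*} [CommRing A] [SetLike σ A] [AddSubgroupClass σ A]
  (𝒜 : ℕ → σ) [GradedRing 𝒜]

theorem irrelevant_le_radical_of_zeroLocus_eq_empty {J : Ideal A} (hJ : J.IsHomogeneous 𝒜)
    (h : zeroLocus 𝒜 J = ∅) : (HomogeneousIdeal.irrelevant 𝒜).toIdeal ≤ J.radical := by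
  rw [hJ.radical_eq]
  refine le_sInf fun P ⟨hP, hJP, hPprime⟩ => ?_
  by_contra hirr
  have hx : (⟨⟨P, hP⟩, hPprime, hirr⟩ : ProjectiveSpectrum 𝒜) ∈ zeroLocus 𝒜 J := hJP
  simp [h] at hx

end ProjectiveSpectrum

namespace MvPolynomial

variable {σ R : Type*} [CommSemiring R]

open scoped Pointwise in
theorem restrictSupport_mul_le {s t u : Set (σ →₀ ℕ)} (h : s + t ⊆ u) :
    restrictSupport R s * restrictSupport R t ≤ restrictSupport R u := by
  rw [← restrictSupport_add]
  exact restrictSupport_mono R h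

variable (σ R) in
def restrictTotalDegreeLT (k : ℕ) : Submodule R (MvPolynomial σ R) :=
  restrictSupport R {m | m.degree < k}

theorem one_mem_restrictTotalDegreeLT :
    (1 : MvPolynomial σ R) ∈ restrictTotalDegreeLT σ R 1 := by
  rw [one_def, restrictTotalDegreeLT, monomial_mem_restrictSupport]
  exact Or.inl (by simp)

theorem restrictTotalDegree_mul_restrictTotalDegreeLT_le (j k : ℕ) :
    restrictTotalDegree σ R j * restrictTotalDegreeLT σ R k ≤
      restrictTotalDegreeLT σ R (j + k) :=
  restrictSupport_mul_le <| Set.add_subset_iff.2 fun a ha b hb => by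
    change (a + b).degree < j + k
    exact (map_add Finsupp.degree a b).symm ▸ Nat.add_lt_add_of_le_of_lt ha hb

theorem restrictTotalDegree_mul_le (j k : ℕ) :
    restrictTotalDegree σ R j * restrictTotalDegree σ R k ≤ restrictTotalDegree σ R (j + k) :=
  restrictSupport_mul_le <| Set.add_subset_iff.2 fun a ha b hb => by
    change (a + b).degree ≤ j + k
    exact (map_add Finsupp.degree a b).symm ▸ Nat.add_le_add ha hb

variable (σ R) in
def degreeRees : Subalgebra R (Polynomial (MvPolynomial σ R)) where
  carrier := {f | ∀ k, f.coeff k ∈ restrictTotalDegree σ R k}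
  mul_mem' {f g} hf hg k := by
    rw [Polynomial.coeff_mul]
    refine Submodule.sum_mem _ fun ij hij => ?_
    rw [← Finset.HasAntidiagonal.mem_antidiagonal.mp hij]
    exact restrictTotalDegree_mul_le _ _ (Submodule.mul_mem_mul (hf ij.1) (hg ij.2))
  add_mem' hf hg k := by
    rw [Polynomial.coeff_add]
    exact add_mem (hf k) (hg k)
  algebraMap_mem' r k := by
    rw [Polynomial.algebraMap_apply, algebraMap_eq, Polynomial.coeff_C]
    split_ifs
    · exact (mem_restrictTotalDegree _ _ _).2 (by simp)
    · exact zero_mem _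

end MvPolynomial

namespace LinearProjection

section Filtration

variable {σ ι R : Type*} [CommRing R]

/-- `I + A_{<k} + ∑ⱼ vⱼ A_{<k}`, where `A_{<k}` are the polynomials of degree `< k`. -/
def filtration (I : Ideal (MvPolynomial σ R)) (v : ι → MvPolynomial σ R) (k : ℕ) :
    Submodule R (MvPolynomial σ R) :=
  I.restrictScalars R ⊔ Submodule.span R (insert 1 (Set.range v)) * restrictTotalDegreeLT σ R k

variable {I : Ideal (MvPolynomial σ R)} {v : ι → MvPolynomial σ R}

theorem mem_filtration_of_mem_ideal {k : ℕ} {a : MvPolynomial σ R} (ha : a ∈ I) :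
    a ∈ filtration I v k :=
  Submodule.mem_sup_left ha

theorem mul_mem_filtration {k : ℕ} {a e : MvPolynomial σ R} (ha : a ∈ insert 1 (Set.range v))
    (he : e ∈ restrictTotalDegreeLT σ R k) : a * e ∈ filtration I v k :=
  Submodule.mem_sup_right (Submodule.mul_mem_mul (Submodule.subset_span ha) he)

theorem restrictTotalDegree_mul_filtration_le (j k : ℕ) :
    restrictTotalDegree σ R j * filtration I v k ≤ filtration I v (j + k) := by
  rw [filtration, Submodule.mul_sup, mul_left_comm]
  exact sup_le_sup (Submodule.mul_le.2 fun a _ b hb => I.mul_mem_left a hb)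
    (mul_le_mul' le_rfl (restrictTotalDegree_mul_restrictTotalDegreeLT_le j k))

variable {B P : Type*} [CommRing B] [Algebra R B] [CommRing P] [Algebra R P] [Algebra P B]
  [IsScalarTower R P B] {π : MvPolynomial σ R →ₐ[R] B}

theorem filtration_le_comap (hv : ∀ j, ∃ p : P, algebraMap P B p = π (v j)) {T : Submodule P B}
    {k : ℕ} (hk : restrictTotalDegreeLT σ R k ≤ (T.restrictScalars R).comap π.toLinearMap) :
    filtration (RingHom.ker π) v k ≤ (T.restrictScalars R).comap π.toLinearMap := by
  have hV : Submodule.span R (insert 1 (Set.range v)) ≤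
      Subalgebra.toSubmodule ((IsScalarTower.toAlgHom R P B).range.comap π) :=
    Submodule.span_le.2 <| Set.insert_subset (Subalgebra.one_mem _) <| Set.range_subset_iff.2 hv
  refine sup_le (fun a ha => ?_) (Submodule.mul_le.2 fun a ha e he => ?_)
  · simp [RingHom.mem_ker.1 ha]
  · obtain ⟨p, hp⟩ : ∃ p : P, algebraMap P B p = π a := hV ha
    change π (a * e) ∈ T
    rw [map_mul, ← hp, ← Algebra.smul_def]
    exact T.smul_mem p (hk he)

theorem restrictTotalDegreeLT_le_comap_span [Fintype σ]
    (hv : ∀ j, ∃ p : P, algebraMap P B p = π (v j)) {N : σ → ℕ}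
    (hN : ∀ i, X i ^ N i ∈ filtration (RingHom.ker π) v (N i)) (k : ℕ) :
    restrictTotalDegreeLT σ R k ≤ ((Submodule.span P ((fun m => π (monomial m 1)) ''
      {m | m.degree ≤ ∑ i, N i})).restrictScalars R).comap π.toLinearMap := by
  refine Nat.strong_induction_on k fun k ih => ?_
  rw [restrictTotalDegreeLT, restrictSupport_eq_span, Submodule.span_le]
  rintro _ ⟨m, hm : m.degree < k, rfl⟩
  by_cases hsmall : ∀ i, m i < N i
  · refine Submodule.subset_span ⟨m, ?_, rfl⟩
    change m.degree ≤ _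
    rw [Finsupp.degree_eq_sum]
    exact Finset.sum_le_sum fun i _ => (hsmall i).le
  push Not at hsmall
  obtain ⟨i, hi⟩ := hsmall
  set β := m - Finsupp.single i (N i)
  have hβ : β + Finsupp.single i (N i) = m := tsub_add_cancel_of_le (Finsupp.single_le_iff.2 hi)
  have hmem : monomial m (1 : R) ∈ filtration (RingHom.ker π) v m.degree := by
    rw [← hβ, ← mul_one (1 : R), ← monomial_mul, ← X_pow_eq_monomial, map_add,
      Finsupp.degree_single]
    refine restrictTotalDegree_mul_filtration_le _ _ (Submodule.mul_mem_mul ?_ (hN i))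
    exact (mem_restrictTotalDegree _ _ _).2 (totalDegree_monomial_le _ _)
  exact filtration_le_comap hv (ih _ hm) hmem

end Filtration

theorem finite_of_X_pow_mem_filtration {σ ι R B : Type*} [Finite σ] [CommRing R] [CommRing B]
    [Algebra R B] (π : MvPolynomial σ R →ₐ[R] B) (hπ : Function.Surjective π)
    (v : ι → MvPolynomial σ R) (h : ∀ i, ∃ N, X i ^ N ∈ filtration (RingHom.ker π) v N) :
    (aeval fun j => π (v j) : MvPolynomial ι R →ₐ[R] B).toRingHom.Finite := by
  cases nonempty_fintype σ
  choose N hN using h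
  let _ := (aeval fun j => π (v j) : MvPolynomial ι R →ₐ[R] B).toRingHom.toAlgebra
  have : IsScalarTower R (MvPolynomial ι R) B :=
    .of_algebraMap_eq fun r => ((aeval fun j => π (v j)).commutes r).symm
  have hv (j : ι) : ∃ p : MvPolynomial ι R, algebraMap _ B p = π (v j) :=
    ⟨X j, aeval_X _ j⟩
  refine ⟨Submodule.fg_def.2 ⟨_, (Finsupp.finite_of_degree_le (σ := σ) (∑ i, N i)).image
    fun m => π (monomial m 1), eq_top_iff.2 fun b _ => ?_⟩⟩
  obtain ⟨a, rfl⟩ := hπ b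
  refine restrictTotalDegreeLT_le_comap_span hv hN (a.totalDegree + 1) ?_
  exact (mem_restrictSupport_iff R).2 fun m hm => Nat.lt_succ_of_le (le_totalDegree hm)

section Rees

variable {R : Type} [CommRing R] {n : ℕ}

/-- Maps a form `f` of degree `k` to `f(1, x₁, …, x_n) tᵏ`, so the coefficient of `tᵏ` in
`toRees ξ` is the dehomogenisation of the degree-`k` part of `ξ`. -/
def toRees : MvPolynomial (Fin (n + 1)) R →ₐ[R] Polynomial (MvPolynomial (Fin n) R) :=
  aeval (Fin.cons Polynomial.X fun j => Polynomial.C (X j) * Polynomial.X)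

@[simp]
theorem toRees_X_zero : toRees (X 0 : MvPolynomial (Fin (n + 1)) R) = Polynomial.X := by
  simp [toRees]

@[simp]
theorem toRees_X_succ (j : Fin n) :
    toRees (X j.succ : MvPolynomial (Fin (n + 1)) R) = Polynomial.C (X j) * Polynomial.X := by
  simp [toRees]

theorem toRees_rename_monomial (m : Fin n →₀ ℕ) (c : R) :
    toRees (rename Fin.succ (monomial m c)) =
      Polynomial.C (monomial m c) * Polynomial.X ^ m.degree := by
  simp only [toRees, aeval_rename, Fin.cons_comp_succ, aeval_monomial,
    Polynomial.algebraMap_apply, algebraMap_eq, mul_pow, Finsupp.prod_mul, Finsupp.prod_pow]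
  rw [Finset.prod_pow_eq_pow_sum, ← Finsupp.degree_eq_sum, monomial_eq,
    Finsupp.prod_fintype _ _ (by simp), map_mul, map_prod]
  simp [mul_assoc]

theorem coeff_toRees_mem_restrictTotalDegree (c : MvPolynomial (Fin (n + 1)) R) (k : ℕ) :
    (toRees c).coeff k ∈ restrictTotalDegree (Fin n) R k := by
  suffices toRees.range ≤ degreeRees (Fin n) R from this ⟨c, rfl⟩ k
  rw [toRees, aeval_range, Algebra.adjoin_le_iff]
  rintro _ ⟨i, rfl⟩ l
  cases i using Fin.cases with
  | zero =>
    rw [Fin.cons_zero, Polynomial.coeff_X]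
    split_ifs
    · exact (mem_restrictTotalDegree _ _ _).2 (by simp)
    · exact zero_mem _
  | succ j =>
    rw [Fin.cons_succ, Polynomial.coeff_C_mul_X]
    split_ifs with h
    · rw [X, h]
      exact (mem_restrictTotalDegree _ _ _).2 ((totalDegree_monomial_le _ _).trans (by simp))
    · exact zero_mem _

theorem toRees_rename_of_isHomogeneous {q : MvPolynomial (Fin n) R} {e : ℕ}
    (hq : q.IsHomogeneous e) :
    toRees (rename Fin.succ q) = Polynomial.C q * Polynomial.X ^ e := by
  have hmon : ∀ m ∈ q.support, toRees (rename Fin.succ (monomial m (coeff m q))) =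
      Polynomial.C (monomial m (coeff m q)) * Polynomial.X ^ e := fun m hm => by
    rw [toRees_rename_monomial, Finsupp.degree_eq_weight_one]
    exact congrArg _ (congrArg _ (hq (mem_support_iff.mp hm)))
  conv_lhs => rw [← support_sum_monomial_coeff q]
  rw [map_sum, map_sum, Finset.sum_congr rfl hmon, ← Finset.sum_mul, ← map_sum,
    support_sum_monomial_coeff]

theorem toRees_homogenize (p : MvPolynomial (Fin n) R) :
    toRees (homogenize p) = Polynomial.C p * Polynomial.X ^ p.totalDegree := by
  have hmon : ∀ m ∈ p.support,
      toRees (monomial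
          (Finsupp.mapDomain Fin.succ m + Finsupp.single 0 (p.totalDegree - m.degree))
          (coeff m p)) =
        Polynomial.C (monomial m (coeff m p)) * Polynomial.X ^ p.totalDegree := by
    intro m hm
    have hdeg : m.degree ≤ p.totalDegree := le_totalDegree hm
    rw [← mul_one (coeff m p), ← monomial_mul, ← rename_monomial, ← X_pow_eq_monomial,
      map_mul, toRees_rename_monomial, map_pow, toRees_X_zero, mul_one, mul_assoc, ← pow_add,
      Nat.add_sub_cancel' hdeg]
  rw [homogenize, map_sum, Finset.sum_congr rfl hmon, ← Finset.sum_mul, ← map_sum,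
    support_sum_monomial_coeff]

theorem homogenize_mem_homogeneousSubmodule (p : MvPolynomial (Fin n) R) :
    homogenize p ∈ homogeneousSubmodule (Fin (n + 1)) R p.totalDegree := by
  refine Submodule.sum_mem _ fun m hm => (mem_homogeneousSubmodule _ _).2 ?_
  refine isHomogeneous_monomial _ ?_
  rw [map_add, Finsupp.degree_mapDomain, Finsupp.degree_single]
  exact Nat.add_sub_cancel' (le_totalDegree hm)

theorem coeff_toRees_mem_filtration {I : Ideal (MvPolynomial (Fin n) R)} {d : ℕ}
    {v : Fin d → MvPolynomial (Fin n) R} (hv : ∀ i, v i ∈ homogeneousSubmodule (Fin n) R 1)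
    {ξ : MvPolynomial (Fin (n + 1)) R}
    (hξ : ξ ∈ Ideal.span (homogenize '' (I : Set (MvPolynomial (Fin n) R)) ∪
      ({X 0} ∪ Set.range fun i => rename Fin.succ (v i)))) (k : ℕ) :
    (toRees ξ).coeff k ∈ filtration I v k := by
  induction hξ using Submodule.span_induction generalizing k with
  | mem x hx =>
    rcases hx with ⟨p, hp, rfl⟩ | rfl | ⟨i, rfl⟩
    · rw [toRees_homogenize, Polynomial.coeff_C_mul_X_pow]
      split_ifs
      · exact mem_filtration_of_mem_ideal hp
      · exact zero_mem _
    · rw [toRees_X_zero, Polynomial.coeff_X]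
      split_ifs with h
      · subst h
        simpa using mul_mem_filtration (Set.mem_insert 1 _) one_mem_restrictTotalDegreeLT
      · exact zero_mem _
    · rw [toRees_rename_of_isHomogeneous ((mem_homogeneousSubmodule _ _).mp (hv i)), pow_one,
        Polynomial.coeff_C_mul_X]
      split_ifs with h
      · subst h
        simpa using
          mul_mem_filtration (Set.mem_insert_of_mem 1 ⟨i, rfl⟩) one_mem_restrictTotalDegreeLT
      · exact zero_mem _
  | zero => simp
  | add x y _ _ hx hy => simpa using add_mem (hx k) (hy k)
  | smul a x _ hx =>
    rw [smul_eq_mul, map_mul, Polynomial.coeff_mul]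
    refine Submodule.sum_mem _ fun ij hij => ?_
    rw [← Finset.HasAntidiagonal.mem_antidiagonal.mp hij]
    exact restrictTotalDegree_mul_filtration_le _ _
      (Submodule.mul_mem_mul (coeff_toRees_mem_restrictTotalDegree a ij.1) (hx ij.2))

end Rees

end LinearProjection

open LinearProjection

/-- Lemma 3.4 of the paper (Schmidt–Strunk, Lemma 2.3).  Let `Y = Spec B` be a closed
subscheme of `𝔸^n_R` via a surjection `π : R[x₁,…,x_n] → B`, with projective closure
`Ȳ = V₊(homogenisation of ker π) ⊆ ℙ^n_R`, and let `v = (v₁,…,v_d)` be linear forms whose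
indeterminacy locus `L_v = V₊(x₀, v̄₁,…,v̄_d)` is disjoint from `Ȳ`.  Then the induced
morphism `v : Y → 𝔸^d_R` is finite. -/
theorem stmt12 (R : Type) [CommRing R] (n d : ℕ)
    (B : Type) [CommRing B] [Algebra R B]
    (π : MvPolynomial (Fin n) R →ₐ[R] B) (hπ : Function.Surjective π)
    (v : Fin d → MvPolynomial (Fin n) R)
    (hv : ∀ i, v i ∈ homogeneousSubmodule (Fin n) R 1)
    (hdisj :
      ProjectiveSpectrum.zeroLocus (homogeneousSubmodule (Fin (n + 1)) R)
          (homogenize '' (RingHom.ker π.toRingHom : Set (MvPolynomial (Fin n) R))) ∩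
        ProjectiveSpectrum.zeroLocus (homogeneousSubmodule (Fin (n + 1)) R)
          ({(X 0 : MvPolynomial (Fin (n + 1)) R)} ∪
            Set.range fun i => rename Fin.succ (v i))
        = ∅) :
    (aeval fun j : Fin d => π (v j) :
        MvPolynomial (Fin d) R →ₐ[R] B).toRingHom.Finite := by
  set J := Ideal.span (homogenize '' (RingHom.ker π.toRingHom : Set (MvPolynomial (Fin n) R)) ∪
    ({X 0} ∪ Set.range fun i => rename Fin.succ (v i)))
  have hJ : J.IsHomogeneous (homogeneousSubmodule (Fin (n + 1)) R) := by
    refine Ideal.homogeneous_span _ _ ?_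
    rintro _ (⟨p, -, rfl⟩ | rfl | ⟨i, rfl⟩)
    · exact ⟨_, homogenize_mem_homogeneousSubmodule p⟩
    · exact ⟨1, isHomogeneous_X R 0⟩
    · exact ⟨1, (hv i).rename_isHomogeneous⟩
  have hJ_empty : ProjectiveSpectrum.zeroLocus (homogeneousSubmodule (Fin (n + 1)) R)
      (J : Set (MvPolynomial (Fin (n + 1)) R)) = ∅ := by
    rw [ProjectiveSpectrum.zeroLocus_span, ProjectiveSpectrum.zeroLocus_union, hdisj]
  refine finite_of_X_pow_mem_filtration π hπ v fun i => ?_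
  obtain ⟨N, hN⟩ := ProjectiveSpectrum.irrelevant_le_radical_of_zeroLocus_eq_empty _ hJ hJ_empty
    (HomogeneousIdeal.mem_irrelevant_of_mem _ one_pos (isHomogeneous_X R i.succ))
  have hcoeff := coeff_toRees_mem_filtration hv hN N
  rw [map_pow, toRees_X_succ, mul_pow, ← map_pow, Polynomial.coeff_C_mul_X_pow, if_pos rfl]
    at hcoeff
  exact ⟨N, hcoeff⟩
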